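/- arXiv:cs/0612026 — 5 statements merged into one kernel-verified Lean document; each statement's English description precedes it below -/
import Mathlib

section
/- Let p be a prime. Define x_k = k·p + ((k·(k+1)/2) mod p) for 0 ≤ k ≤ 2p - 1, and x_{k+2p} = x_k + p for 0 ≤ k ≤ 2p - 1. Then every integer x with |x| < p² can be written as x_i - x_j for some indices 0 ≤ i, j ≤ 4p - 1. -/
set_option maxHeartbeats 1000000 in
/-- The difference-covering sequence: every integer `x` with `|x| < p²` is a
difference `x i - x j` of two terms of the sequence with indices `< 4p`. -/
theorem difference_covering (p : ℕ) (hp : p.Prime) (f : ℕ → ℤ)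
    (h₁ : ∀ k < 2 * p, f k = (k : ℤ) * p + ((k * (k + 1) / 2 : ℤ) % p))
    (h₂ : ∀ k < 2 * p, f (k + 2 * p) = f k + p) :
    ∀ x : ℤ, |x| < (p : ℤ) ^ 2 →
      ∃ i < 4 * p, ∃ j < 4 * p, x = f i - f j := by
  haveI : Fact p.Prime := ⟨hp⟩
  have hp1 : 1 < p := hp.one_lt
  have hP0 : (0:ℤ) < (p:ℤ) := by exact_mod_cast hp.pos
  have hP1 : (1:ℤ) < (p:ℤ) := by exact_mod_cast hp1
  intro x hx
  obtain ⟨hx1, hx2⟩ := abs_lt.mp hx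
  set q : ℤ := x / (p:ℤ) with hq
  set r : ℤ := x % (p:ℤ) with hr
  have hxeq : (p:ℤ) * q + r = x := Int.mul_ediv_add_emod x (p:ℤ)
  have hr0 : 0 ≤ r := Int.emod_nonneg x (ne_of_gt hP0)
  have hrP : r < (p:ℤ) := Int.emod_lt_of_pos x hP0
  have hxpp : x < (p:ℤ) * (p:ℤ) := by rw [pow_two] at hx2; exact hx2
  have hqlt : q < (p:ℤ) := (Int.ediv_lt_iff_lt_mul hP0).mpr hxpp
  have hqge : -(p:ℤ) ≤ q := (Int.le_ediv_iff_mul_le hP0).mpr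
    (by rw [pow_two] at hx1; linarith)
  set d : ℤ := if (p:ℤ) ∣ q then q + 1 else q with hd
  have hpd : ¬ (p:ℤ) ∣ d := by
    by_cases h : (p:ℤ) ∣ q
    · rw [hd, if_pos h]
      intro hcon
      have h1 : (p:ℤ) ∣ 1 := by simpa using dvd_sub hcon h
      have := Int.le_of_dvd one_pos h1
      linarith
    · rw [hd, if_neg h]; exact h
  have hdlb : -(p:ℤ) < d := by
    by_cases h : (p:ℤ) ∣ q
    · rw [hd, if_pos h]; linarith
    · rw [hd, if_neg h]
      rcases lt_or_eq_of_le hqge with h' | h'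
      · exact h'
      · exact absurd (h' ▸ ⟨-1, by ring⟩) h
  have hdub : d < (p:ℤ) := by
    by_cases h : (p:ℤ) ∣ q
    · rw [hd, if_pos h]
      obtain ⟨c, hc⟩ := h
      have hc1 : c < 1 := by nlinarith
      have hq0 : q ≤ 0 := by nlinarith
      linarith
    · rw [hd, if_neg h]; exact hqlt
  set Td : ℤ := d * (d + 1) / 2 with hTddef
  have hTd : 2 * Td = d * (d + 1) :=
    Int.mul_ediv_cancel' ((Int.even_mul_succ_self d).two_dvd)
  have hdz : ((d : ℤ) : ZMod p) ≠ 0 := by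
    rw [Ne, ZMod.intCast_zmod_eq_zero_iff_dvd]
    exact hpd
  set u : ZMod p := ((r - Td : ℤ) : ZMod p) * ((d:ℤ) : ZMod p)⁻¹ with hu
  set j0 : ℕ := u.val with hj0
  have hj0p : j0 < p := ZMod.val_lt u
  set jn : ℕ := if 0 ≤ d then j0 else j0 + p with hjn
  have hjn2p : jn < 2 * p := by
    by_cases h : 0 ≤ d
    · rw [hjn, if_pos h]; omega
    · rw [hjn, if_neg h]; omega
  have hval : ((j0 : ℕ) : ZMod p) = u := by
    simp [hj0, ZMod.natCast_val, ZMod.cast_id]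
  have hucast : ((jn : ℕ) : ZMod p) = u := by
    by_cases h : 0 ≤ d
    · rw [hjn, if_pos h]; exact hval
    · rw [hjn, if_neg h]; push_cast [ZMod.natCast_self]; simp [hval]
  have hkey : (p:ℤ) ∣ (d * (jn : ℤ) + Td - r) := by
    have h0 : ((d * (jn:ℤ) + Td - r : ℤ) : ZMod p) = 0 := by
      push_cast
      rw [hucast, hu]
      push_cast
      field_simp
      ring
    exact (ZMod.intCast_zmod_eq_zero_iff_dvd _ p).mp h0
  have hjd0 : 0 ≤ (jn : ℤ) + d := by
    by_cases h : 0 ≤ d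
    · have : (0:ℤ) ≤ (jn:ℤ) := Int.natCast_nonneg jn
      linarith
    · have hjnp : (p:ℤ) ≤ (jn:ℤ) := by
        rw [hjn, if_neg h]
        push_cast
        linarith [Int.natCast_nonneg (j0:ℕ)]
      linarith
  set i0 : ℕ := ((jn : ℤ) + d).toNat with hi0
  have hicast : (i0 : ℤ) = (jn : ℤ) + d := Int.toNat_of_nonneg hjd0
  have hi2p : i0 < 2 * p := by
    have hi : (i0:ℤ) < 2*(p:ℤ) := by
      rw [hicast]
      by_cases h : 0 ≤ d
      · have hjP : (jn:ℤ) < (p:ℤ) := by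
          rw [hjn, if_pos h]
          exact_mod_cast hj0p
        linarith
      · have : (jn:ℤ) < 2*(p:ℤ) := by exact_mod_cast hjn2p
        linarith [not_le.mp h]
    exact_mod_cast hi
  set Ta : ℤ := (i0:ℤ) * ((i0:ℤ) + 1) / 2 with hTa
  set Tb : ℤ := (jn:ℤ) * ((jn:ℤ) + 1) / 2 with hTb
  have h2a : 2 * Ta = (i0:ℤ) * ((i0:ℤ) + 1) :=
    Int.mul_ediv_cancel' ((Int.even_mul_succ_self _).two_dvd)
  have h2b : 2 * Tb = (jn:ℤ) * ((jn:ℤ) + 1) :=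
    Int.mul_ediv_cancel' ((Int.even_mul_succ_self _).two_dvd)
  have hTT : Ta - Tb = d * (jn:ℤ) + Td := by
    have h2 : 2 * (Ta - Tb) = 2 * (d * (jn:ℤ) + Td) := by
      rw [mul_sub, h2a, h2b, hicast]
      linear_combination -hTd
    exact mul_left_cancel₀ two_ne_zero h2
  set a : ℤ := Ta % (p:ℤ) with ha
  set b : ℤ := Tb % (p:ℤ) with hb
  have ha0 : 0 ≤ a := Int.emod_nonneg Ta (ne_of_gt hP0)
  have haP : a < (p:ℤ) := Int.emod_lt_of_pos Ta hP0
  have hb0 : 0 ≤ b := Int.emod_nonneg Tb (ne_of_gt hP0)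
  have hbP : b < (p:ℤ) := Int.emod_lt_of_pos Tb hP0
  have ea := Int.mul_ediv_add_emod Ta (p:ℤ)
  have eb := Int.mul_ediv_add_emod Tb (p:ℤ)
  have hdvd : (p:ℤ) ∣ (a - b - r) := by
    have e : a - b - r = (d*(jn:ℤ) + Td - r) + (p:ℤ)*(Tb/(p:ℤ)) - (p:ℤ)*(Ta/(p:ℤ)) := by
      linear_combination ea - eb + hTT
    rw [e]
    exact dvd_sub (dvd_add hkey (dvd_mul_right _ _)) (dvd_mul_right _ _)
  obtain ⟨c, hc⟩ := hdvd
  have hc0 : c = 0 ∨ c = -1 := by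
    have h1 : (p:ℤ) * c < (p:ℤ) := by linarith only [hc, haP, hb0, hr0]
    have h2 : -(2*(p:ℤ)) < (p:ℤ) * c := by linarith only [hc, ha0, hbP, hrP]
    have hc1 : c < 1 := by nlinarith [h1, hP0]
    have hc2 : -2 < c := by nlinarith [h2, hP0]
    omega
  have hfj : f jn = (jn:ℤ) * (p:ℤ) + b := h₁ jn hjn2p
  have hfi : f i0 = (i0:ℤ) * (p:ℤ) + a := h₁ i0 hi2p
  have hiP : (i0:ℤ) * (p:ℤ) = (jn:ℤ) * (p:ℤ) + d * (p:ℤ) := by rw [hicast]; ring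
  rcases hc0 with hc0 | hc0
  · have hab : a - b = r := by rw [hc0] at hc; linarith only [hc]
    by_cases hq' : (p:ℤ) ∣ q
    · have hdq : d * (p:ℤ) = (p:ℤ) * q + (p:ℤ) := by rw [hd, if_pos hq']; ring
      refine ⟨i0, by omega, jn + 2*p, by omega, ?_⟩
      rw [h₂ jn hjn2p, hfi, hfj]
      linarith only [hiP, hdq, hxeq, hab]
    · have hdq : d * (p:ℤ) = (p:ℤ) * q := by rw [hd, if_neg hq']; ring
      refine ⟨i0, by omega, jn, by omega, ?_⟩
      rw [hfi, hfj]
      linarith only [hiP, hdq, hxeq, hab]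
  · have hab : a - b = r - (p:ℤ) := by rw [hc0] at hc; linarith only [hc]
    by_cases hq' : (p:ℤ) ∣ q
    · have hdq : d * (p:ℤ) = (p:ℤ) * q + (p:ℤ) := by rw [hd, if_pos hq']; ring
      refine ⟨i0, by omega, jn, by omega, ?_⟩
      rw [hfi, hfj]
      linarith only [hiP, hdq, hxeq, hab]
    · have hdq : d * (p:ℤ) = (p:ℤ) * q := by rw [hd, if_neg hq']; ring
      refine ⟨i0 + 2*p, by omega, jn, by omega, ?_⟩
      rw [h₂ i0 hi2p, hfi, hfj]
      linarith only [hiP, hdq, hxeq, hab]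
end

section
/- Let p be a prime, 0 ≤ k < p, and define x_k = k·p + ((k(k+1)/2) mod p) for 0 ≤ k ≤ 2p-1. For 0 ≤ i < p, the difference X_i = x_{k+i} - x_i satisfies (k-1)·p < X_i < (k+1)·p, and X_i ≡ X_0 + i·k (mod p). -/
set_option maxHeartbeats 1000000


/-- For `0 ≤ k < p` and `0 ≤ i < p`, with `x m = m·p + ((m(m+1)/2) mod p)`, the
difference `X i = x (k+i) - x i` satisfies `(k-1)p < X i < (k+1)p` and
`X i ≡ X 0 + i·k (mod p)`. -/
theorem difference_bounds_and_congr (p : ℕ) (hp : p.Prime) (k : ℕ) (hk : k < p)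
    (x : ℕ → ℤ) (hx : ∀ m ≤ 2 * p - 1, x m = (m : ℤ) * p + ((m * (m + 1) / 2 : ℤ) % p))
    (i : ℕ) (hi : i < p) :
    ((k : ℤ) - 1) * p < x (k + i) - x i ∧
    x (k + i) - x i < ((k : ℤ) + 1) * p ∧
    x (k + i) - x i ≡ (x k - x 0) + (i : ℤ) * k [ZMOD p] := by
  have hp1 : 1 ≤ p := hp.one_lt.le
  have hki : k + i ≤ 2 * p - 1 := by omega
  have h1 := hx (k + i) hki
  have h2 := hx i (by omega)
  have h3 := hx k (by omega)
  have h4 := hx 0 (by omega)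
  have hp0 : (0 : ℤ) < p := by exact_mod_cast hp.pos
  have h2dvd : ∀ m : ℤ, 2 * (m * (m + 1) / 2) = m * (m + 1) := fun m =>
    Int.mul_ediv_cancel' (Int.even_mul_succ_self m).two_dvd
  set A : ℤ := ((k : ℤ) + i) * ((k : ℤ) + i + 1) / 2 with hA
  set B : ℤ := (i : ℤ) * ((i : ℤ) + 1) / 2 with hB
  set C : ℤ := (k : ℤ) * ((k : ℤ) + 1) / 2 with hC
  have hABC : A = B + C + i * k := by
    have e1 := h2dvd ((k : ℤ) + i)
    have e2 := h2dvd (i : ℤ)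
    have e3 := h2dvd (k : ℤ)
    nlinarith [e1, e2, e3]
  have hAnn : 0 ≤ A % p := Int.emod_nonneg _ (ne_of_gt hp0)
  have hAlt : A % p < p := Int.emod_lt_of_pos _ hp0
  have hBnn : 0 ≤ B % p := Int.emod_nonneg _ (ne_of_gt hp0)
  have hBlt : B % p < p := Int.emod_lt_of_pos _ hp0
  have hxi : x (k + i) - x i = (k : ℤ) * p + (A % p - B % p) := by
    rw [h1, h2]; push_cast; ring_nf; push_cast [hA, hB]; ring_nf
  have hmod : ∀ m r : ℤ, m * p + r % p ≡ r [ZMOD (p : ℤ)] := by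
    intro m r
    have hd : (p : ℤ) ∣ m * p := ⟨m, mul_comm _ _⟩
    have h1 : m * (p : ℤ) ≡ 0 [ZMOD (p : ℤ)] := (Int.modEq_zero_iff_dvd).mpr hd
    have h2 : r % (p : ℤ) ≡ r [ZMOD (p : ℤ)] := Int.emod_emod_of_dvd _ dvd_rfl
    simpa using h1.add h2
  refine ⟨by rw [hxi]; nlinarith, by rw [hxi]; nlinarith, ?_⟩
  have g1 : x (k + i) - x i ≡ A - B [ZMOD (p : ℤ)] := by
    rw [h1, h2]
    push_cast
    have := (hmod ((k : ℤ) + i) A).sub (hmod (i : ℤ) B)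
    convert this using 2
  have g2 : x k - x 0 + (i : ℤ) * k ≡ C + (i : ℤ) * k [ZMOD (p : ℤ)] := by
    rw [h3, h4]
    push_cast
    have := (hmod (k : ℤ) C).sub (hmod 0 0)
    have h' := this.add_right ((i : ℤ) * k)
    convert h' using 2
    simp
  calc x (k + i) - x i ≡ A - B [ZMOD (p : ℤ)] := g1
    _ = C + (i : ℤ) * k := by rw [hABC]; ring
    _ ≡ x k - x 0 + (i : ℤ) * k [ZMOD (p : ℤ)] := g2.symm
end

section
/- Let P₁, P₂, P₃ be three disks in the plane with radii ρ₁, ρ₂, ρ₃ ≥ 0 satisfying ρ₁ + ρ₂ + ρ₃ < R/2, and let O be the closed disk of radius R > 0 centered at the origin. Then the union ⋃_{i,j=1}^{3} (P_i ⊖ P_j) does not cover O. -/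
open MeasureTheory Metric Set

set_option maxHeartbeats 1000000

private instance fact_two_pi_pos : Fact (0 < 2*Real.pi) := ⟨by positivity⟩

private lemma chord_sq (R m ψ : ℝ) :
    ‖(R:ℂ) * Complex.exp (ψ * Complex.I) - m‖ ^ 2
      = R^2 + m^2 - 2*R*m*Real.cos ψ := by
  rw [Complex.sq_norm, Complex.normSq_apply]
  simp [Complex.exp_ofReal_mul_I_re, Complex.exp_ofReal_mul_I_im, Complex.sub_re, Complex.sub_im,
    Complex.mul_re, Complex.mul_im]
  nlinarith [Real.sin_sq_add_cos_sq ψ]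

private lemma abs_rotate (R θ : ℝ) (c : ℂ) :
    ‖(R:ℂ) * Complex.exp (θ * Complex.I) - c‖
      = ‖(R:ℂ) * Complex.exp (((θ - c.arg : ℝ) : ℂ) * Complex.I) - ((‖c‖ : ℝ) : ℂ)‖ := by
  have he : Complex.exp (c.arg * Complex.I) * Complex.exp (((θ - c.arg : ℝ) : ℂ) * Complex.I)
      = Complex.exp (θ * Complex.I) := by
    rw [← Complex.exp_add]; congr 1; push_cast; ring
  have h : (R:ℂ) * Complex.exp (θ * Complex.I) - c
      = Complex.exp (c.arg * Complex.I)
         * ((R:ℂ) * Complex.exp (((θ - c.arg : ℝ) : ℂ) * Complex.I) - ((‖c‖ : ℝ) : ℂ)) := by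
    conv_lhs => rw [← Complex.norm_mul_exp_arg_mul_I c]
    rw [← he]; ring
  rw [h, norm_mul, Complex.norm_exp_ofReal_mul_I, one_mul]

private lemma arc_dist (R r : ℝ) (hR : 0 < R) (hr : 0 ≤ r) (h2 : 2*r < R) {c : ℂ} (hc : c ≠ 0)
    {θ : ℝ} (hθ : ‖(R:ℂ) * Complex.exp (θ * Complex.I) - c‖ ≤ r) :
    dist ((θ : AddCircle (2*Real.pi))) ((c.arg : AddCircle (2*Real.pi)))
      ≤ Real.pi * r / R / 2 := by
  have hπ : 0 < Real.pi := Real.pi_pos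
  set m := ‖c‖ with hmdef
  have hm0 : 0 < m := norm_pos_iff.mpr hc
  set ψ := θ - c.arg with hψ
  have h1 : R^2 + m^2 - 2*R*m*Real.cos ψ ≤ r^2 := by
    have hc2 := chord_sq R m ψ
    rw [abs_rotate] at hθ
    nlinarith [norm_nonneg ((R:ℂ) * Complex.exp ((ψ:ℝ) * Complex.I) - (m:ℂ))]
  have hd : dist ((θ : AddCircle (2*Real.pi))) ((c.arg : AddCircle (2*Real.pi)))
      = |ψ - round ((2*Real.pi)⁻¹ * ψ) * (2*Real.pi)| := by
    rw [dist_eq_norm, ← QuotientAddGroup.mk_sub, AddCircle.norm_eq]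
  set d := |ψ - round ((2*Real.pi)⁻¹ * ψ) * (2*Real.pi)| with hddef
  have hd0 : 0 ≤ d := abs_nonneg _
  have hdπ : d ≤ Real.pi := by
    have h := AddCircle.norm_le_half_period (p := 2*Real.pi)
      (x := ((ψ : ℝ) : AddCircle (2*Real.pi))) (by positivity)
    rw [AddCircle.norm_eq] at h
    rw [abs_of_pos (by positivity : (0:ℝ) < 2*Real.pi)] at h
    linarith [h]
  have hcosd : Real.cos d = Real.cos ψ := by
    rw [hddef, Real.cos_abs, Real.cos_sub_int_mul_two_pi]
  have hcosψ : 0 < Real.cos ψ := by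
    rcases le_or_gt (Real.cos ψ) 0 with h | h
    · exfalso
      nlinarith [mul_nonneg (mul_pos (mul_pos two_pos hR) hm0).le (neg_nonneg.2 h)]
    · exact h
  have hcospos : 0 < Real.cos d := by rw [hcosd]; exact hcosψ
  have hd2 : d < Real.pi/2 := by
    by_contra h
    push_neg at h
    have := Real.cos_nonpos_of_pi_div_two_le_of_le h (by linarith)
    linarith
  have hsin0 : 0 ≤ Real.sin d := Real.sin_nonneg_of_nonneg_of_le_pi hd0 hdπ
  have hpy : Real.sin d ^ 2 = 1 - Real.cos ψ ^ 2 := by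
    rw [← hcosd]; nlinarith [Real.sin_sq_add_cos_sq d]
  have hlb : (R^2 + m^2 - r^2) ≤ 2*R*m*Real.cos ψ := by linarith
  have hposA : (0:ℝ) ≤ R^2 + m^2 - r^2 := by nlinarith
  have hsq : (R^2 + m^2 - r^2)^2 ≤ (2*R*m*Real.cos ψ)^2 := by nlinarith
  have e1 : 4*m^2*(R*Real.sin d)^2 = 4*R^2*m^2 - (2*R*m*Real.cos ψ)^2 := by
    linear_combination (4*m^2*R^2) * hpy
  have hsinsq : (R * Real.sin d)^2 ≤ r^2 := by
    nlinarith [e1, hsq, sq_nonneg (R^2 - r^2 - m^2), mul_pos hm0 hm0]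
  have hsin : R * Real.sin d ≤ r := by
    nlinarith [mul_nonneg hR.le hsin0]
  have hjordan : 2/Real.pi * d ≤ Real.sin d := Real.mul_le_sin hd0 hd2.le
  rw [hd]
  have hkey : 2/Real.pi * d * R ≤ r := by nlinarith
  rw [div_div, le_div_iff₀ (by positivity)]
  calc d * (R * 2) = (2/Real.pi * d * R) * Real.pi := by field_simp
    _ ≤ r * Real.pi := by nlinarith
    _ = Real.pi * r := by ring

private lemma arc_vol (R r : ℝ) (hR : 0 < R) (hr : 0 ≤ r) (h2 : 2*r < R) (c : ℂ) :
    volume ((fun θ : ℝ => (θ : AddCircle (2*Real.pi))) ''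
        {θ : ℝ | ‖(R:ℂ) * Complex.exp (θ * Complex.I) - c‖ ≤ r})
      ≤ ENNReal.ofReal (Real.pi * r / R) := by
  have hπ : 0 < Real.pi := Real.pi_pos
  rcases eq_or_ne c 0 with rfl | hc
  · have hempty : {θ : ℝ | ‖(R:ℂ) * Complex.exp (θ * Complex.I) - 0‖ ≤ r} = ∅ := by
      ext θ
      simp only [sub_zero, norm_mul, Complex.norm_exp_ofReal_mul_I, mul_one, Complex.norm_real, Real.norm_eq_abs,
        mem_setOf_eq, mem_empty_iff_false, iff_false, not_le, abs_of_pos hR]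
      linarith
    rw [hempty, Set.image_empty, measure_empty]
    positivity
  · have hsub : (fun θ : ℝ => (θ : AddCircle (2*Real.pi))) ''
        {θ : ℝ | ‖(R:ℂ) * Complex.exp (θ * Complex.I) - c‖ ≤ r}
        ⊆ closedBall ((c.arg : ℝ) : AddCircle (2*Real.pi)) (Real.pi * r / R / 2) := by
      intro x hx
      obtain ⟨θ, hθ, rfl⟩ := hx
      exact mem_closedBall.mpr (arc_dist R r hR hr h2 hc hθ)
    refine le_trans (measure_mono hsub) ?_
    rw [AddCircle.volume_closedBall]
    apply ENNReal.ofReal_le_ofReal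
    refine le_trans (min_le_right _ _) (le_of_eq ?_)
    ring

/-- If the radii of three pupils satisfy `ρ₁ + ρ₂ + ρ₃ < R/2`, then their
auto-correlation support does not cover the objective of radius `R`. -/
theorem small_radii_not_cover (R : ℝ) (hR : 0 < R) (c : Fin 3 → ℂ) (ρ : Fin 3 → ℝ)
    (hρ : ∀ i, 0 ≤ ρ i) (hsum : ρ 0 + ρ 1 + ρ 2 < R / 2) :
    ¬ (Metric.closedBall (0 : ℂ) R ⊆
        ⋃ i, ⋃ j, Metric.closedBall (c i - c j) (ρ i + ρ j)) := by
  intro hcov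
  have hπ : 0 < Real.pi := Real.pi_pos
  have hsingle : ∀ i : Fin 3, ρ i ≤ ρ 0 + ρ 1 + ρ 2 := by
    intro i
    have h := Finset.single_le_sum (f := ρ) (fun k _ => hρ k) (Finset.mem_univ i)
    simpa [Fin.sum_univ_three] using h
  have hpair : ∀ i j : Fin 3, i ≠ j → ρ i + ρ j ≤ ρ 0 + ρ 1 + ρ 2 := by
    intro i j hij
    have h1 := Finset.sum_pair (f := ρ) hij
    have h2 := Finset.sum_le_sum_of_subset_of_nonneg
      (Finset.subset_univ ({i, j} : Finset (Fin 3))) (fun k _ _ => hρ k)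
    have h3 := Fin.sum_univ_three ρ
    linarith
  set S : Fin 3 → Fin 3 → Set (AddCircle (2*Real.pi)) := fun i j =>
    (fun θ : ℝ => (θ : AddCircle (2*Real.pi))) ''
      {θ : ℝ | ‖(R:ℂ) * Complex.exp (θ * Complex.I) - (c i - c j)‖ ≤ ρ i + ρ j}
    with hS
  have huniv : (Set.univ : Set (AddCircle (2*Real.pi))) ⊆ ⋃ i, ⋃ j, S i j := by
    intro x _
    induction x using QuotientAddGroup.induction_on with
    | H θ =>
      have hz : (R:ℂ) * Complex.exp (θ*Complex.I) ∈ Metric.closedBall (0:ℂ) R := by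
        simp only [mem_closedBall, Complex.dist_eq, sub_zero, norm_mul,
          Complex.norm_exp_ofReal_mul_I, mul_one, Complex.norm_real, Real.norm_eq_abs, abs_of_pos hR, le_refl]
      obtain ⟨i, hi⟩ := Set.mem_iUnion.1 (hcov hz)
      obtain ⟨j, hij⟩ := Set.mem_iUnion.1 hi
      rw [mem_closedBall, Complex.dist_eq] at hij
      exact Set.mem_iUnion.2 ⟨i, Set.mem_iUnion.2 ⟨j, ⟨θ, hij, rfl⟩⟩⟩
  have hle : ENNReal.ofReal (2*Real.pi) ≤ ∑ i : Fin 3, ∑ j : Fin 3, volume (S i j) := by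
    rw [← AddCircle.measure_univ (T := 2*Real.pi)]
    refine le_trans (measure_mono huniv) ?_
    refine le_trans (measure_iUnion_fintype_le _ _) ?_
    exact Finset.sum_le_sum fun i _ => measure_iUnion_fintype_le _ _
  have hdiag : ∀ i, volume (S i i) = 0 := by
    intro i
    have hempty : S i i = ∅ := by
      simp only [hS, sub_self]
      refine Set.image_eq_empty.mpr ?_
      rw [Set.eq_empty_iff_forall_notMem]
      intro θ hθ
      simp only [Set.mem_setOf_eq, sub_zero, norm_mul, Complex.norm_exp_ofReal_mul_I, mul_one,
        Complex.norm_real, Real.norm_eq_abs, abs_of_pos hR] at hθ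
      linarith [hsingle i, hρ i, hρ 0, hρ 1, hρ 2]
    rw [hempty]; exact measure_empty
  have hoff : ∀ i j : Fin 3, i ≠ j →
      volume (S i j) ≤ ENNReal.ofReal (Real.pi * (ρ i + ρ j) / R) := by
    intro i j hij
    have h2 : 2*(ρ i + ρ j) < R := by linarith [hpair i j hij]
    exact arc_vol R (ρ i + ρ j) hR (by linarith [hρ i, hρ j]) h2 _
  rw [Fin.sum_univ_three] at hle
  simp only [Fin.sum_univ_three] at hle
  rw [hdiag 0, hdiag 1, hdiag 2] at hle
  have hnn : ∀ i j : Fin 3, (0:ℝ) ≤ Real.pi * (ρ i + ρ j) / R := by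
    intro i j
    have hi := hρ i; have hj := hρ j
    positivity
  have key : ENNReal.ofReal (2*Real.pi)
      ≤ 0 + ENNReal.ofReal (Real.pi * (ρ 0 + ρ 1) / R) + ENNReal.ofReal (Real.pi * (ρ 0 + ρ 2) / R)
        + (ENNReal.ofReal (Real.pi * (ρ 1 + ρ 0) / R) + 0 + ENNReal.ofReal (Real.pi * (ρ 1 + ρ 2) / R))
        + (ENNReal.ofReal (Real.pi * (ρ 2 + ρ 0) / R) + ENNReal.ofReal (Real.pi * (ρ 2 + ρ 1) / R) + 0) := by
    refine le_trans hle ?_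
    gcongr
    · exact hoff 0 1 (by decide)
    · exact hoff 0 2 (by decide)
    · exact hoff 1 0 (by decide)
    · exact hoff 1 2 (by decide)
    · exact hoff 2 0 (by decide)
    · exact hoff 2 1 (by decide)
  have hre : (0:ENNReal) + ENNReal.ofReal (Real.pi * (ρ 0 + ρ 1) / R) + ENNReal.ofReal (Real.pi * (ρ 0 + ρ 2) / R)
        + (ENNReal.ofReal (Real.pi * (ρ 1 + ρ 0) / R) + 0 + ENNReal.ofReal (Real.pi * (ρ 1 + ρ 2) / R))
        + (ENNReal.ofReal (Real.pi * (ρ 2 + ρ 0) / R) + ENNReal.ofReal (Real.pi * (ρ 2 + ρ 1) / R) + 0)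
      = ENNReal.ofReal (Real.pi * (ρ 0 + ρ 1) / R + Real.pi * (ρ 0 + ρ 2) / R
          + (Real.pi * (ρ 1 + ρ 0) / R + Real.pi * (ρ 1 + ρ 2) / R)
          + (Real.pi * (ρ 2 + ρ 0) / R + Real.pi * (ρ 2 + ρ 1) / R)) := by
    rw [zero_add, add_zero, add_zero,
      ENNReal.ofReal_add (add_nonneg (add_nonneg (hnn 0 1) (hnn 0 2)) (add_nonneg (hnn 1 0) (hnn 1 2)))
        (add_nonneg (hnn 2 0) (hnn 2 1)),
      ENNReal.ofReal_add (add_nonneg (hnn 0 1) (hnn 0 2)) (add_nonneg (hnn 1 0) (hnn 1 2)),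
      ENNReal.ofReal_add (hnn 0 1) (hnn 0 2), ENNReal.ofReal_add (hnn 1 0) (hnn 1 2),
      ENNReal.ofReal_add (hnn 2 0) (hnn 2 1)]
  rw [hre] at key
  have hX : Real.pi * (ρ 0 + ρ 1) / R + Real.pi * (ρ 0 + ρ 2) / R
      + (Real.pi * (ρ 1 + ρ 0) / R + Real.pi * (ρ 1 + ρ 2) / R)
      + (Real.pi * (ρ 2 + ρ 0) / R + Real.pi * (ρ 2 + ρ 1) / R)
      = Real.pi * (4*(ρ 0 + ρ 1 + ρ 2)) / R := by ring
  rw [hX] at key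
  have hXnn : (0:ℝ) ≤ Real.pi * (4*(ρ 0 + ρ 1 + ρ 2)) / R :=
    div_nonneg (mul_nonneg hπ.le (by linarith [hρ 0, hρ 1, hρ 2])) hR.le
  rw [ENNReal.ofReal_le_ofReal_iff hXnn] at key
  have key2 : 2*Real.pi * R ≤ Real.pi * (4*(ρ 0 + ρ 1 + ρ 2)) := (le_div_iff₀ hR).mp key
  nlinarith [key2, hsum, hπ, hR]
end

section
/- Among all configurations of three disks P₁, P₂, P₃ whose auto-correlation support covers the disk O of radius R centered at the origin, the minimum possible value of ρ₁ + ρ₂ + ρ₃ is R/2. -/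
open Real MeasureTheory Complex Set

example (u : ℝ) : ‖Complex.exp (u * Complex.I)‖ = 1 := by simp [Complex.norm_exp]

lemma abs_exp_I_sub (u v : ℝ) :
    ‖Complex.exp (u * Complex.I) - Complex.exp (v * Complex.I)‖
      = 2 * |Real.sin ((u - v) / 2)| := by
  have h1 : (u : ℂ) * Complex.I
      = (((u + v) / 2 : ℝ) : ℂ) * Complex.I + (((u - v) / 2 : ℝ) : ℂ) * Complex.I := by
    push_cast; ring
  have h2 : (v : ℂ) * Complex.I
      = (((u + v) / 2 : ℝ) : ℂ) * Complex.I + ((-((u - v) / 2) : ℝ) : ℂ) * Complex.I := by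
    push_cast; ring
  have h3 : Complex.exp ((((u - v) / 2 : ℝ) : ℂ) * Complex.I)
        - Complex.exp (((-((u - v) / 2) : ℝ) : ℂ) * Complex.I)
      = ((2 * Real.sin ((u - v) / 2) : ℝ) : ℂ) * Complex.I := by
    rw [Complex.exp_mul_I, Complex.exp_mul_I]
    push_cast
    rw [Complex.cos_neg, Complex.sin_neg]
    ring
  rw [h1, h2, Complex.exp_add, Complex.exp_add, ← mul_sub, norm_mul, h3, norm_mul,
    Complex.norm_exp, Complex.norm_I, Complex.norm_real, Real.norm_eq_abs]
  simp [abs_mul]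

lemma key_angle {R r : ℝ} (hR : 0 < R) (hr2 : r ≤ R / 2) {d : ℂ} {u v : ℝ}
    (hu : ‖(R : ℂ) * Complex.exp (u * Complex.I) - d‖ ≤ r)
    (hv : ‖(R : ℂ) * Complex.exp (v * Complex.I) - d‖ ≤ r)
    (huv : |u - v| ≤ π) : |u - v| ≤ π * r / R := by
  have hπ := Real.pi_pos
  have hchord : ‖(R : ℂ) * Complex.exp (u * Complex.I)
      - (R : ℂ) * Complex.exp (v * Complex.I)‖ ≤ 2 * r := by
    have h := dist_triangle ((R : ℂ) * Complex.exp (u * Complex.I)) d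
      ((R : ℂ) * Complex.exp (v * Complex.I))
    rw [Complex.dist_eq, Complex.dist_eq, Complex.dist_eq,
      norm_sub_rev d] at h
    linarith
  rw [← mul_sub, norm_mul, Complex.norm_real, Real.norm_eq_abs, _root_.abs_of_pos hR,
    abs_exp_I_sub] at hchord
  have hsin : |Real.sin ((u - v) / 2)| ≤ r / R := by
    rw [le_div_iff₀ hR]; nlinarith
  have habs : Real.sin (|u - v| / 2) ≤ r / R := by
    rcases le_or_gt 0 (u - v) with h | h
    · rwa [_root_.abs_of_nonneg h, ← _root_.abs_of_nonneg
        (Real.sin_nonneg_of_nonneg_of_le_pi (by linarith)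
          (by rw [_root_.abs_of_nonneg h] at huv; linarith))]
    · rw [abs_of_neg h, neg_div, Real.sin_neg]
      rw [abs_of_neg h] at huv
      have hs0 : Real.sin ((u - v) / 2) ≤ 0 :=
        Real.sin_nonpos_of_nonpos_of_neg_pi_le (by linarith) (by linarith)
      rwa [abs_of_nonpos hs0] at hsin
  have hj : 2 / π * (|u - v| / 2) ≤ Real.sin (|u - v| / 2) :=
    Real.mul_le_sin (by positivity) (by linarith [abs_nonneg (u - v)])
  have : 2 / π * (|u - v| / 2) ≤ r / R := le_trans hj habs
  calc |u - v| = π * (2 / π * (|u - v| / 2)) := by field_simp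
    _ ≤ π * (r / R) := by nlinarith
    _ = π * r / R := by ring

lemma exp_I_shift (θ : ℝ) :
    Complex.exp (((θ + 2 * π : ℝ) : ℂ) * Complex.I) = Complex.exp ((θ : ℂ) * Complex.I) := by
  push_cast
  rw [add_mul, Complex.exp_add, Complex.exp_two_pi_mul_I, mul_one]

lemma vol_arc {R r : ℝ} (hR : 0 < R) (hr0 : 0 ≤ r) (hr2 : r ≤ R / 2) (d : ℂ) :
    volume ({θ : ℝ | ‖(R : ℂ) * Complex.exp (θ * Complex.I) - d‖ ≤ r}
        ∩ Set.Ico 0 (2 * π))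
      ≤ ENNReal.ofReal (π * r / R) := by
  have hπ := Real.pi_pos
  set S : Set ℝ := {θ : ℝ | ‖(R : ℂ) * Complex.exp (θ * Complex.I) - d‖ ≤ r}
    with hS
  have hSmem : ∀ θ : ℝ, θ ∈ S ↔
      ‖(R : ℂ) * Complex.exp (θ * Complex.I) - d‖ ≤ r := fun θ => Iff.rfl
  have hper : ∀ θ : ℝ, θ ∈ S → θ + 2 * π ∈ S := by
    intro θ hθ
    rw [hSmem]
    rw [show ((θ + 2*π : ℝ) : ℂ) = ((θ + 2*π : ℝ) : ℂ) from rfl, exp_I_shift]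
    exact hθ
  have hper' : ∀ θ : ℝ, θ ∈ S → θ - 2 * π ∈ S := by
    intro θ hθ
    have h := hθ
    rw [hSmem, show (θ : ℂ) = ((θ - 2*π + 2*π : ℝ) : ℂ) by push_cast; ring, exp_I_shift] at h
    exact h
  set α := π * r / R with hα
  have hα0 : 0 ≤ α := by positivity
  have hαπ : α ≤ π / 2 := by
    rw [hα, div_le_iff₀ hR]; nlinarith
  rcases Set.eq_empty_or_nonempty (S ∩ Set.Ico 0 (2 * π)) with hemp | ⟨θ₀, hθ₀S, hθ₀I⟩
  · rw [hemp]; simp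
  obtain ⟨hθ₀0, hθ₀2π⟩ := hθ₀I
  have key : ∀ u v : ℝ, u ∈ S → v ∈ S → |u - v| ≤ π → |u - v| ≤ α :=
    fun u v hu hv huv => key_angle hR hr2 hu hv huv
  set U : Set ℝ := S ∩ Set.Icc (θ₀ - α) (θ₀ + α) with hU
  have hUdiam : volume U ≤ ENNReal.ofReal α := by
    refine (Real.volume_le_diam U).trans (EMetric.diam_le ?_)
    rintro x ⟨hxS, hx1, hx2⟩ y ⟨hyS, hy1, hy2⟩
    rw [edist_dist, Real.dist_eq]
    refine ENNReal.ofReal_le_ofReal ?_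
    refine key x y hxS hyS ?_
    rw [abs_sub_le_iff]; constructor <;> linarith
  have hSmeas : MeasurableSet S := by
    have hc : Continuous fun θ : ℝ => ‖(R : ℂ) * Complex.exp (θ * Complex.I) - d‖ :=
      continuous_norm.comp (by fun_prop)
    exact (isClosed_le hc continuous_const).measurableSet
  set P1 := (S ∩ Set.Ico 0 (2 * π)) ∩ {θ : ℝ | |θ - θ₀| ≤ π} with hP1
  set P2 := (S ∩ Set.Ico 0 (2 * π)) ∩ {θ : ℝ | π < θ - θ₀} with hP2
  set P3 := (S ∩ Set.Ico 0 (2 * π)) ∩ {θ : ℝ | θ - θ₀ < -π} with hP3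
  set Q2 := (fun θ : ℝ => θ + 2 * π) ⁻¹' P2 with hQ2
  set Q3 := (fun θ : ℝ => θ - 2 * π) ⁻¹' P3 with hQ3
  have hsplit : S ∩ Set.Ico 0 (2 * π) ⊆ P1 ∪ P2 ∪ P3 := by
    intro θ hθ
    rcases le_or_gt (|θ - θ₀|) π with h | h
    · exact Or.inl (Or.inl ⟨hθ, h⟩)
    · rcases lt_abs.mp h with h' | h'
      · exact Or.inl (Or.inr ⟨hθ, show π < θ - θ₀ from h'⟩)
      · exact Or.inr ⟨hθ, show θ - θ₀ < -π by linarith⟩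
  have hP1U : P1 ⊆ U := by
    rintro θ ⟨⟨hθS, _⟩, hθd⟩
    have := key θ θ₀ hθS hθ₀S hθd
    rw [abs_sub_le_iff] at this
    exact ⟨hθS, by constructor <;> linarith [this.1, this.2]⟩
  have hQ2U : Q2 ⊆ U := by
    intro θ hθ
    simp only [hQ2, Set.mem_preimage, hP2, Set.mem_inter_iff, Set.mem_Ico,
      Set.mem_setOf_eq] at hθ
    obtain ⟨⟨hθS, hθ0, hθ2π⟩, hθd⟩ := hθ
    have hθS' : θ ∈ S := by
      have := hper' _ hθS
      simpa using this
    have habs : |θ - θ₀| ≤ π := by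
      rw [abs_sub_le_iff]; constructor <;> linarith
    have := key θ θ₀ hθS' hθ₀S habs
    rw [abs_sub_le_iff] at this
    exact ⟨hθS', by constructor <;> linarith [this.1, this.2]⟩
  have hQ3U : Q3 ⊆ U := by
    intro θ hθ
    simp only [hQ3, Set.mem_preimage, hP3, Set.mem_inter_iff, Set.mem_Ico,
      Set.mem_setOf_eq] at hθ
    obtain ⟨⟨hθS, hθ0, hθ2π⟩, hθd⟩ := hθ
    have hθS' : θ ∈ S := by
      have := hper _ hθS
      simpa using this
    have habs : |θ - θ₀| ≤ π := by
      rw [abs_sub_le_iff]; constructor <;> linarith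
    have := key θ θ₀ hθS' hθ₀S habs
    rw [abs_sub_le_iff] at this
    exact ⟨hθS', by constructor <;> linarith [this.1, this.2]⟩
  have hP1m : MeasurableSet P1 :=
    (hSmeas.inter measurableSet_Ico).inter
      ((isClosed_le ((continuous_id.sub continuous_const).abs) continuous_const).measurableSet)
  have hP2m : MeasurableSet P2 :=
    (hSmeas.inter measurableSet_Ico).inter
      ((isOpen_lt continuous_const (continuous_id.sub continuous_const)).measurableSet)
  have hP3m : MeasurableSet P3 :=
    (hSmeas.inter measurableSet_Ico).inter
      ((isOpen_lt (continuous_id.sub continuous_const) continuous_const).measurableSet)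
  have hQ2m : MeasurableSet Q2 := hP2m.preimage (measurable_id.add_const _)
  have hQ3m : MeasurableSet Q3 := hP3m.preimage (measurable_id.sub_const _)
  have hvQ2 : volume Q2 = volume P2 := by
    rw [hQ2]
    exact measure_preimage_add_right volume (2 * π) P2
  have hvQ3 : volume Q3 = volume P3 := by
    rw [hQ3]
    have : (fun θ : ℝ => θ - 2 * π) = fun θ : ℝ => θ + (-(2 * π)) := by
      funext θ; ring
    rw [this]
    exact measure_preimage_add_right volume (-(2 * π)) P3
  have hd12 : Disjoint P1 Q2 := by
    refine Set.disjoint_left.mpr ?_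
    intro θ hθ1 hθ2
    simp only [hQ2, Set.mem_preimage, hP2, Set.mem_inter_iff, Set.mem_Ico,
      Set.mem_setOf_eq] at hθ2
    have h1 : (0:ℝ) ≤ θ := hθ1.1.2.1
    linarith [hθ2.1.2.2]
  have hd3 : Disjoint (P1 ∪ Q2) Q3 := by
    refine Set.disjoint_left.mpr ?_
    intro θ hθ1 hθ2
    simp only [hQ3, Set.mem_preimage, hP3, Set.mem_inter_iff, Set.mem_Ico,
      Set.mem_setOf_eq] at hθ2
    have h2 : 2 * π ≤ θ := by linarith [hθ2.1.2.1]
    rcases hθ1 with h | h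
    · exact absurd h.1.2.2 (by linarith)
    · simp only [hQ2, Set.mem_preimage, hP2, Set.mem_inter_iff, Set.mem_Ico,
        Set.mem_setOf_eq] at h
      linarith [h.1.2.2]
  calc volume (S ∩ Set.Ico 0 (2 * π)) ≤ volume (P1 ∪ P2 ∪ P3) := measure_mono hsplit
    _ ≤ volume (P1 ∪ P2) + volume P3 := measure_union_le _ _
    _ ≤ volume P1 + volume P2 + volume P3 := by
        gcongr
        exact measure_union_le _ _
    _ = volume P1 + volume Q2 + volume Q3 := by rw [hvQ2, hvQ3]
    _ = volume (P1 ∪ Q2) + volume Q3 := by rw [measure_union hd12 hQ2m]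
    _ = volume ((P1 ∪ Q2) ∪ Q3) := by rw [measure_union hd3 hQ3m]
    _ ≤ volume U := measure_mono (by
        intro θ hθ
        rcases hθ with (h | h) | h
        · exact hP1U h
        · exact hQ2U h
        · exact hQ3U h)
    _ ≤ ENNReal.ofReal α := hUdiam

/-- Among all valid configurations of three pupils (whose auto-correlation
support covers the objective of radius `R`), the minimum possible value of
`ρ₁ + ρ₂ + ρ₃` is `R/2`. -/
theorem min_sum_radii_three_pupils (R : ℝ) (hR : 0 < R) :
    IsLeast {s : ℝ | ∃ (c : Fin 3 → ℂ) (ρ : Fin 3 → ℝ), (∀ i, 0 ≤ ρ i) ∧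
      (Metric.closedBall (0 : ℂ) R ⊆
        ⋃ i, ⋃ j, Metric.closedBall (c i - c j) (ρ i + ρ j)) ∧
      s = ρ 0 + ρ 1 + ρ 2} (R / 2) := by
  have hπ := Real.pi_pos
  constructor
  · refine ⟨fun _ => 0, ![R / 2, 0, 0], ?_, ?_, ?_⟩
    · intro i; fin_cases i <;> simp <;> linarith
    · intro x hx
      refine Set.mem_iUnion.mpr ⟨0, Set.mem_iUnion.mpr ⟨0, ?_⟩⟩
      simp only [Matrix.cons_val_zero, sub_self]
      rw [show R / 2 + R / 2 = R by ring]
      simpa using hx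
    · simp
  · rintro s ⟨c, ρ, hρ, hcov, rfl⟩
    by_contra hlt
    push_neg at hlt
    have hsle : ∀ i, ρ i ≤ ρ 0 + ρ 1 + ρ 2 := by
      intro i; fin_cases i <;> simp <;> linarith [hρ 0, hρ 1, hρ 2]
    have hpair : ∀ i j : Fin 3, i ≠ j → ρ i + ρ j ≤ ρ 0 + ρ 1 + ρ 2 := by
      intro i j hij; fin_cases i <;> fin_cases j <;>
        first
        | exact absurd rfl hij
        | (simp; linarith [hρ 0, hρ 1, hρ 2])
    set T : Fin 3 → Fin 3 → Set ℝ := fun i j =>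
      {θ : ℝ | ‖(R : ℂ) * Complex.exp (θ * Complex.I) - (c i - c j)‖ ≤ ρ i + ρ j}
        ∩ Set.Ico 0 (2 * π) with hT
    have hcover : Set.Ico (0:ℝ) (2 * π) ⊆ ⋃ i, ⋃ j, T i j := by
      intro θ hθ
      have hx : ((R : ℂ) * Complex.exp ((θ : ℂ) * Complex.I)) ∈ Metric.closedBall (0 : ℂ) R := by
        rw [Metric.mem_closedBall, Complex.dist_eq, sub_zero, norm_mul, Complex.norm_real, Real.norm_eq_abs,
          _root_.abs_of_pos hR]
        simp [Complex.norm_exp]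
      obtain ⟨i, hi⟩ := Set.mem_iUnion.mp (hcov hx)
      obtain ⟨j, hj⟩ := Set.mem_iUnion.mp hi
      rw [Metric.mem_closedBall, Complex.dist_eq] at hj
      exact Set.mem_iUnion.mpr ⟨i, Set.mem_iUnion.mpr ⟨j, ⟨hj, hθ⟩⟩⟩
    have hdiag : ∀ i : Fin 3, volume (T i i) = 0 := by
      intro i
      have he : T i i = ∅ := by
        rw [Set.eq_empty_iff_forall_notMem]
        rintro θ ⟨h1, _⟩
        simp only [Set.mem_setOf_eq, sub_self, sub_zero, norm_mul, Complex.norm_real, Real.norm_eq_abs,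
          Complex.norm_exp] at h1
        rw [_root_.abs_of_pos hR] at h1
        have hre : ((θ : ℂ) * Complex.I).re = 0 := by simp
        rw [hre, Real.exp_zero, mul_one] at h1
        linarith [hsle i, hρ i]
      rw [he]; simp
    have hoff : ∀ i j : Fin 3, i ≠ j →
        volume (T i j) ≤ ENNReal.ofReal (π * (ρ i + ρ j) / R) := by
      intro i j hij
      exact vol_arc hR (by linarith [hρ i, hρ j])
        (le_of_lt (lt_of_le_of_lt (hpair i j hij) hlt)) (c i - c j)
    have hIco : volume (Set.Ico (0:ℝ) (2 * π)) = ENNReal.ofReal (2 * π) := by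
      rw [Real.volume_Ico, sub_zero]
    have hmain : ENNReal.ofReal (2 * π) ≤ ∑ i : Fin 3, ∑ j : Fin 3, volume (T i j) := by
      rw [← hIco]
      refine (measure_mono hcover).trans ((measure_iUnion_le _).trans ?_)
      rw [tsum_fintype]
      exact Finset.sum_le_sum fun i _ =>
        (measure_iUnion_le _).trans (le_of_eq (tsum_fintype _))
    simp only [Fin.sum_univ_three] at hmain
    rw [hdiag 0, hdiag 1, hdiag 2] at hmain
    simp only [zero_add, add_zero] at hmain
    have hmain2 : ENNReal.ofReal (2 * π) ≤
        ENNReal.ofReal (π * (ρ 0 + ρ 1) / R + π * (ρ 0 + ρ 2) / R + (π * (ρ 1 + ρ 0) / R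
          + π * (ρ 1 + ρ 2) / R) + (π * (ρ 2 + ρ 0) / R + π * (ρ 2 + ρ 1) / R)) := by
      refine hmain.trans ?_
      rw [ENNReal.ofReal_add (by have h0 := hρ 0; have h1 := hρ 1; have h2 := hρ 2; positivity) (by have h0 := hρ 0; have h1 := hρ 1; have h2 := hρ 2; positivity),
        ENNReal.ofReal_add (by have h0 := hρ 0; have h1 := hρ 1; have h2 := hρ 2; positivity) (by have h0 := hρ 0; have h1 := hρ 1; have h2 := hρ 2; positivity),
        ENNReal.ofReal_add (by have h0 := hρ 0; have h1 := hρ 1; have h2 := hρ 2; positivity) (by have h0 := hρ 0; have h1 := hρ 1; have h2 := hρ 2; positivity),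
        ENNReal.ofReal_add (by have h0 := hρ 0; have h1 := hρ 1; have h2 := hρ 2; positivity) (by have h0 := hρ 0; have h1 := hρ 1; have h2 := hρ 2; positivity),
        ENNReal.ofReal_add (by have h0 := hρ 0; have h1 := hρ 1; have h2 := hρ 2; positivity) (by have h0 := hρ 0; have h1 := hρ 1; have h2 := hρ 2; positivity)]
      gcongr
      · exact hoff 0 1 (by decide)
      · exact hoff 0 2 (by decide)
      · exact hoff 1 0 (by decide)
      · exact hoff 1 2 (by decide)
      · exact hoff 2 0 (by decide)
      · exact hoff 2 1 (by decide)
    rw [ENNReal.ofReal_le_ofReal_iff (by have h0 := hρ 0; have h1 := hρ 1; have h2 := hρ 2; positivity)] at hmain2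
    have h4 : π * (ρ 0 + ρ 1) / R + π * (ρ 0 + ρ 2) / R + (π * (ρ 1 + ρ 0) / R
          + π * (ρ 1 + ρ 2) / R) + (π * (ρ 2 + ρ 0) / R + π * (ρ 2 + ρ 1) / R)
        = π * (4 * (ρ 0 + ρ 1 + ρ 2)) / R := by ring
    rw [h4, le_div_iff₀ hR] at hmain2
    nlinarith [mul_lt_mul_of_pos_left hlt (show (0:ℝ) < 4 * π by positivity)]
end

section
/- Let D be the closed disk of center c_D = (0, d) with d ≥ 0 and radius ρ_D < R, and suppose p, q are two points on the circle ∂O of radius R centered at the origin with p, q ∈ D. Then the shorter circular arc of ∂O between p and q is contained in the disk centered at c_D of radius max(‖p - c_D‖, ‖q - c_D‖), provided this radius is < R. -/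
lemma normsq_formula (R d θ : ℝ) :
    ‖(R:ℂ) * Complex.exp (θ * Complex.I) - (d:ℂ) * Complex.I‖^2
      = R^2 + d^2 - 2*R*d*Real.sin θ := by
  rw [Complex.sq_norm, Complex.normSq_apply]
  simp [Complex.exp_mul_I, Complex.cos_ofReal_re, Complex.sin_ofReal_re]
  nlinarith [Real.sin_sq_add_cos_sq θ]

lemma sin_min (θ₁ θ₂ θ : ℝ) (h1 : 0 < Real.sin θ₁) (h2 : 0 < Real.sin θ₂)
    (hl : θ₁ ≤ θ) (hr : θ ≤ θ₂) (harc : θ₂ - θ₁ ≤ Real.pi) :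
    min (Real.sin θ₁) (Real.sin θ₂) ≤ Real.sin θ := by
  have hpi := Real.pi_pos
  set k : ℤ := ⌊θ₁ / (2 * Real.pi)⌋ with hk
  have h2pi : 0 < 2 * Real.pi := by linarith
  have hfl : (k:ℝ) * (2 * Real.pi) ≤ θ₁ :=
    (le_div_iff₀ h2pi).mp (Int.floor_le _)
  have hfl2 : θ₁ < ((k:ℝ) + 1) * (2 * Real.pi) :=
    (div_lt_iff₀ h2pi).mp (Int.lt_floor_add_one _)
  set a := θ₁ - 2 * Real.pi * k with ha
  set b := θ₂ - 2 * Real.pi * k with hb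
  set c := θ - 2 * Real.pi * k with hc
  have ea : Real.sin a = Real.sin θ₁ := by
    have h := Real.sin_add_int_mul_two_pi θ₁ (-k); push_cast at h
    rw [ha, show θ₁ - 2 * Real.pi * k = θ₁ + -(k:ℝ) * (2*Real.pi) by ring]; exact h
  have eb : Real.sin b = Real.sin θ₂ := by
    have h := Real.sin_add_int_mul_two_pi θ₂ (-k); push_cast at h
    rw [hb, show θ₂ - 2 * Real.pi * k = θ₂ + -(k:ℝ) * (2*Real.pi) by ring]; exact h
  have ec : Real.sin c = Real.sin θ := by
    have h := Real.sin_add_int_mul_two_pi θ (-k); push_cast at h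
    rw [hc, show θ - 2 * Real.pi * k = θ + -(k:ℝ) * (2*Real.pi) by ring]; exact h
  have ha0 : 0 ≤ a := by rw [ha]; nlinarith
  have ha2 : a < 2 * Real.pi := by rw [ha]; nlinarith
  have hapi : a < Real.pi := by
    by_contra h
    push_neg at h
    have : Real.sin a = -Real.sin (a - Real.pi) := by
      have h' := Real.sin_add_pi (a - Real.pi)
      rw [show a - Real.pi + Real.pi = a by ring] at h'; linarith
    have hs : 0 ≤ Real.sin (a - Real.pi) :=
      Real.sin_nonneg_of_nonneg_of_le_pi (by linarith) (by linarith)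
    rw [ea] at this; linarith
  have ha0' : 0 < a := by
    rcases ha0.lt_or_eq with h | h
    · exact h
    · exfalso; rw [← ea, ← h, Real.sin_zero] at h1; linarith
  have hbpi : b < Real.pi := by
    by_contra h
    push_neg at h
    have hb2 : b < 2 * Real.pi := by rw [hb, ha] at *; nlinarith
    have : Real.sin b = -Real.sin (b - Real.pi) := by
      have h' := Real.sin_add_pi (b - Real.pi)
      rw [show b - Real.pi + Real.pi = b by ring] at h'; linarith
    have hs : 0 ≤ Real.sin (b - Real.pi) :=
      Real.sin_nonneg_of_nonneg_of_le_pi (by linarith) (by linarith)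
    rw [eb] at this; linarith
  have hac : a ≤ c := by rw [ha, hc]; linarith
  have hcb : c ≤ b := by rw [hb, hc]; linarith
  rcases le_total c (Real.pi / 2) with h | h
  · have : Real.sin a ≤ Real.sin c := by
      apply Real.strictMonoOn_sin.monotoneOn ?_ ?_ hac
      · constructor <;> [linarith; linarith]
      · constructor <;> [linarith; linarith]
    rw [ea, ec] at this
    exact le_trans (min_le_left _ _) this
  · have e1 : Real.sin (Real.pi - b) = Real.sin b := Real.sin_pi_sub b
    have e2 : Real.sin (Real.pi - c) = Real.sin c := Real.sin_pi_sub c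
    have : Real.sin (Real.pi - b) ≤ Real.sin (Real.pi - c) := by
      apply Real.strictMonoOn_sin.monotoneOn ?_ ?_ (by linarith)
      · constructor <;> [linarith; linarith]
      · constructor <;> [linarith; linarith]
    rw [e1, e2, eb, ec] at this
    exact le_trans (min_le_right _ _) this
open Complex in
/-- Let `D` be the closed disk of center `c_D = (0, d)` (`d ≥ 0`) and radius
`ρ_D < R`, and let `p = R·e^{iθ₁}`, `q = R·e^{iθ₂}` be points of the circle of
radius `R` about the origin lying in `D`, with `θ₁ ≤ θ₂` and `θ₂ - θ₁ ≤ π`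
(so the arc from `θ₁` to `θ₂` is the shorter arc).  Then every point of that
arc lies in the disk about `c_D` of radius `max ‖p - c_D‖ ‖q - c_D‖`, provided
this radius is `< R`. -/
theorem minor_arc_in_disk (R d ρD : ℝ) (hR : 0 < R) (hd : 0 ≤ d) (hρD : ρD < R)
    (θ₁ θ₂ : ℝ) (hθ : θ₁ ≤ θ₂) (harc : θ₂ - θ₁ ≤ Real.pi)
    (cD : ℂ) (hcD : cD = d * Complex.I)
    (p q : ℂ) (hp : p = R * Complex.exp (θ₁ * Complex.I))
    (hq : q = R * Complex.exp (θ₂ * Complex.I))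
    (hpD : ‖p - cD‖ ≤ ρD) (hqD : ‖q - cD‖ ≤ ρD)
    (r : ℝ) (hr : r = max ‖p - cD‖ ‖q - cD‖) (hrR : r < R) :
    ∀ θ ∈ Set.Icc θ₁ θ₂, ‖(R : ℂ) * Complex.exp (θ * Complex.I) - cD‖ ≤ r := by
  intro θ hθmem
  obtain ⟨hθ1, hθ2⟩ := hθmem
  subst hcD hp hq
  have e1 : ‖(R:ℂ) * Complex.exp (θ₁ * Complex.I) - (d:ℂ) * Complex.I‖^2
      = R^2 + d^2 - 2*R*d*Real.sin θ₁ := normsq_formula R d θ₁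
  have e2 : ‖(R:ℂ) * Complex.exp (θ₂ * Complex.I) - (d:ℂ) * Complex.I‖^2
      = R^2 + d^2 - 2*R*d*Real.sin θ₂ := normsq_formula R d θ₂
  have e3 : ‖(R:ℂ) * Complex.exp (θ * Complex.I) - (d:ℂ) * Complex.I‖^2
      = R^2 + d^2 - 2*R*d*Real.sin θ := normsq_formula R d θ
  -- r ≥ each norm, r < R
  have hr1 : ‖(R:ℂ) * Complex.exp (θ₁ * Complex.I) - (d:ℂ) * Complex.I‖ ≤ r :=
    hr ▸ le_max_left _ _
  have hr2 : ‖(R:ℂ) * Complex.exp (θ₂ * Complex.I) - (d:ℂ) * Complex.I‖ ≤ r :=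
    hr ▸ le_max_right _ _
  have hr0 : 0 ≤ r := le_trans (norm_nonneg _) hr1
  have sq1 : ‖(R:ℂ) * Complex.exp (θ₁ * Complex.I) - (d:ℂ) * Complex.I‖^2 ≤ r^2 := by
    nlinarith [norm_nonneg ((R:ℂ) * Complex.exp (θ₁ * Complex.I) - (d:ℂ) * Complex.I)]
  have sq2 : ‖(R:ℂ) * Complex.exp (θ₂ * Complex.I) - (d:ℂ) * Complex.I‖^2 ≤ r^2 := by
    nlinarith [norm_nonneg ((R:ℂ) * Complex.exp (θ₂ * Complex.I) - (d:ℂ) * Complex.I)]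
  have hrR2 : r^2 < R^2 := by nlinarith
  -- d > 0
  have hd0 : 0 < d := by
    rcases hd.lt_or_eq with h | h
    · exact h
    · exfalso
      have : ‖(R:ℂ) * Complex.exp (θ₁ * Complex.I) - (d:ℂ) * Complex.I‖^2 = R^2 := by
        rw [e1, ← h]; ring
      nlinarith [norm_nonneg ((R:ℂ) * Complex.exp (θ₁ * Complex.I) - (d:ℂ) * Complex.I)]
  -- sin θ₁ > 0, sin θ₂ > 0
  have hRd : 0 < R * d := mul_pos hR hd0
  have hs1 : 0 < Real.sin θ₁ := by nlinarith [sq1, e1, hrR2, sq_nonneg d]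
  have hs2 : 0 < Real.sin θ₂ := by nlinarith [sq2, e2, hrR2, sq_nonneg d]
  have hmin := sin_min θ₁ θ₂ θ hs1 hs2 hθ1 hθ2 harc
  -- conclude
  rw [e1] at sq1; rw [e2] at sq2
  have hsq : ‖(R:ℂ) * Complex.exp (θ * Complex.I) - (d:ℂ) * Complex.I‖^2 ≤ r^2 := by
    rw [e3]
    rcases le_total (Real.sin θ₁) (Real.sin θ₂) with h | h
    · have hs : Real.sin θ₁ ≤ Real.sin θ := by rw [min_eq_left h] at hmin; exact hmin
      have h' : 2*R*d*Real.sin θ₁ ≤ 2*R*d*Real.sin θ :=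
        mul_le_mul_of_nonneg_left hs (by positivity)
      linarith
    · have hs : Real.sin θ₂ ≤ Real.sin θ := by rw [min_eq_right h] at hmin; exact hmin
      have h' : 2*R*d*Real.sin θ₂ ≤ 2*R*d*Real.sin θ :=
        mul_le_mul_of_nonneg_left hs (by positivity)
      linarith
  exact (pow_le_pow_iff_left₀ (norm_nonneg _) hr0 two_ne_zero).mp hsq
end
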